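/- arXiv:1108.4829 — 7 statements merged into one kernel-verified Lean document; each statement's English description precedes it below -/
import Mathlib

section
/- Let C be a Boolean algebra of commuting weak*-continuous idempotents on a dual Banach space X, Y a weak*-closed C-invariant subspace, and M = ran φ for some φ ∈ C. Then Ref_C(Y + M) = Ref_C(Y) + M. In particular, if Y is C-reflexive then Y + M is C-reflexive. -/
open NormedSpace Filter Pointwise

namespace RBP

variable (E : Type*) [NormedAddCommGroup E] [NormedSpace ℂ E]

/-- The dual Banach space. -/
abbrev X := StrongDual ℂ E

variable {E}

/-- A subset of the dual is weak*-closed if its image in `WeakDual` is closed. -/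
def WClosed (S : Set (X E)) : Prop :=
  IsClosed (StrongDual.toWeakDual '' S)

/-- The weak* closure of a subset of the dual. -/
def WClosure (S : Set (X E)) : Set (X E) :=
  StrongDual.toWeakDual ⁻¹' closure (StrongDual.toWeakDual '' S)

/-- An operator on the dual is weak*-continuous if the induced map on `WeakDual` is continuous. -/
def WContinuous (φ : X E →L[ℂ] X E) : Prop :=
  Continuous (fun x : WeakDual ℂ E =>
    StrongDual.toWeakDual (φ (StrongDual.toWeakDual.symm x)))

/-- The range (fixed point set) of an idempotent operator. -/
def Ran (φ : X E →L[ℂ] X E) : Set (X E) := {x | φ x = x}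

/-- A Boolean algebra of pairwise commuting weak*-continuous idempotents on the dual. -/
structure IsIdemBoolAlg (C : Set (X E →L[ℂ] X E)) : Prop where
  idem : ∀ φ ∈ C, φ.comp φ = φ
  comm : ∀ φ ∈ C, ∀ ψ ∈ C, φ.comp ψ = ψ.comp φ
  wcont : ∀ φ ∈ C, WContinuous φ
  zero_mem : (0 : X E →L[ℂ] X E) ∈ C
  id_mem : (ContinuousLinearMap.id ℂ (X E)) ∈ C
  compl_mem : ∀ φ ∈ C, (ContinuousLinearMap.id ℂ (X E) - φ) ∈ C
  mul_mem : ∀ φ ∈ C, ∀ ψ ∈ C, φ.comp ψ ∈ C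
  sup_mem : ∀ φ ∈ C, ∀ ψ ∈ C, (φ + ψ - φ.comp ψ) ∈ C

/-- The `C`-reflexive hull of a subset of the dual. -/
def RefC (C : Set (X E →L[ℂ] X E)) (Y : Set (X E)) : Set (X E) :=
  {x | ∀ φ ∈ C, (∀ y ∈ Y, φ y = 0) → φ x = 0}

/-- A subset is `C`-invariant if it is invariant under each member of `C`. -/
def CInvariant (C : Set (X E →L[ℂ] X E)) (Y : Set (X E)) : Prop :=
  ∀ φ ∈ C, ∀ y ∈ Y, φ y ∈ Y

/-- Approximately `C`-injective subspaces: intersections of uniformly bounded decreasing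
sequences of ranges of idempotents in `C`. -/
def ApproxInj (C : Set (X E →L[ℂ] X E)) (M : Set (X E)) : Prop :=
  ∃ (φ : ℕ → (X E →L[ℂ] X E)) (K : ℝ), 0 < K ∧ (∀ n, φ n ∈ C) ∧ (∀ n, ‖φ n‖ ≤ K) ∧
    (∀ n, Ran (φ (n + 1)) ⊆ Ran (φ n)) ∧ M = ⋂ n, Ran (φ n)

/-- The set of weak* cluster points of sequences chosen from a sequence of sets. -/
def WLimsup (M : ℕ → Set (X E)) : Set (X E) :=
  {x | ∃ s : ℕ → X E, (∀ n, s n ∈ M n) ∧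
    MapClusterPt (StrongDual.toWeakDual x) atTop
      (fun n => StrongDual.toWeakDual (s n))}

/-- `C`-decomposable subspaces. -/
def Decomp (C : Set (X E →L[ℂ] X E)) (V : Set (X E)) : Prop :=
  WClosed V ∧
  ∃ (φ : ℕ → (X E →L[ℂ] X E)) (W : ℕ → Set (X E)) (K : ℝ), 0 < K ∧
    (∀ n, φ n ∈ C) ∧ (∀ n, ∃ ψ ∈ C, W n = Ran ψ) ∧ (∀ n, ‖φ n‖ ≤ K) ∧
    (∀ n, V ⊆ Ran (φ n) + W n) ∧ (∀ n, W n ⊆ V) ∧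
    WLimsup (fun n => Ran (φ n)) ⊆ V


theorem refC_sum_injective {C : Set (X E →L[ℂ] X E)} (hC : IsIdemBoolAlg C)
    (Y : Submodule ℂ (X E)) (hYc : WClosed (Y : Set (X E)))
    (hYi : CInvariant C (Y : Set (X E)))
    {φ : X E →L[ℂ] X E} (hφ : φ ∈ C) {M : Set (X E)} (hM : M = Ran φ) :
    RefC C ((Y : Set (X E)) + M) = RefC C (Y : Set (X E)) + M ∧
      (RefC C (Y : Set (X E)) = (Y : Set (X E)) →
        RefC C ((Y : Set (X E)) + M) = (Y : Set (X E)) + M) := by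
  subst hM
  have hmem0 : (0 : X E) ∈ Ran φ := by simp [Ran]
  have key : RefC C ((Y : Set (X E)) + Ran φ) = RefC C (Y : Set (X E)) + Ran φ := by
    ext x
    constructor
    · intro hx
      have hθ : (ContinuousLinearMap.id ℂ (X E) - φ) ∈ C := hC.compl_mem φ hφ
      refine Set.mem_add.mpr ⟨x - φ x, ?_, φ x, ?_, by abel⟩
      · intro ψ hψ hψY
        have hχ : ψ.comp (ContinuousLinearMap.id ℂ (X E) - φ) ∈ C :=
          hC.mul_mem ψ hψ _ hθ
        have hχ0 : ∀ z ∈ (Y : Set (X E)) + Ran φ,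
            (ψ.comp (ContinuousLinearMap.id ℂ (X E) - φ)) z = 0 := by
          intro z hz
          obtain ⟨y, hy, m, hm, rfl⟩ := Set.mem_add.mp hz
          have hφy : φ y ∈ (Y : Set (X E)) := hYi φ hφ y hy
          have hyy : y - φ y ∈ (Y : Set (X E)) := Y.sub_mem hy hφy
          have hmm : φ m = m := hm
          simp only [ContinuousLinearMap.comp_apply, ContinuousLinearMap.sub_apply,
            ContinuousLinearMap.id_apply, map_add]
          simp [hψY _ hyy, hmm]
        have := hx _ hχ hχ0
        simpa using this
      · show φ (φ x) = φ x
        have := hC.idem φ hφ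
        calc φ (φ x) = (φ.comp φ) x := rfl
          _ = φ x := by rw [this]
    · intro hx ψ hψ hψ0
      obtain ⟨a, ha, b, hb, rfl⟩ := Set.mem_add.mp hx
      have ha0 : ψ a = 0 := by
        refine ha ψ hψ fun y hy => hψ0 y (Set.mem_add.mpr ⟨y, hy, 0, hmem0, by simp⟩)
      have hb0 : ψ b = 0 :=
        hψ0 b (Set.mem_add.mpr ⟨0, Y.zero_mem, b, hb, by simp⟩)
      rw [map_add, ha0, hb0, add_zero]
  exact ⟨key, fun h => by rw [key, h]⟩

end RBP
end

section
/- Let C be a Boolean algebra of commuting weak*-continuous idempotents on a dual Banach space X, and let M = ⋂ₙ ran φₙ be an approximately C-injective subspace, where (φₙ) ⊆ C satisfies ‖φₙ‖ ≤ K for some constant K and ran φₙ₊₁ ⊆ ran φₙ. If Y ⊆ X is a weak*-closed C-invariant subspace, then Y + M is weak*-closed. -/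
open NormedSpace Filter Pointwise

namespace RBP

variable (E : Type*) [NormedAddCommGroup E] [NormedSpace ℂ E]

variable {E}

section AuxRBP

/-- The induced map on `WeakDual`. -/
noncomputable def wmap (f : X E →L[ℂ] X E) : WeakDual ℂ E → WeakDual ℂ E :=
  fun w => StrongDual.toWeakDual (f (StrongDual.toWeakDual.symm w))

lemma wmap_image_preimage (f : X E →L[ℂ] X E) (S : Set (X E)) :
    StrongDual.toWeakDual '' (f ⁻¹' S) = wmap f ⁻¹' (StrongDual.toWeakDual '' S) := by
  ext w
  simp only [Set.mem_image, Set.mem_preimage, wmap]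
  constructor
  · rintro ⟨x, hx, rfl⟩
    exact ⟨f x, hx, by rw [LinearEquiv.symm_apply_apply]⟩
  · rintro ⟨z, hz, hz2⟩
    refine ⟨StrongDual.toWeakDual.symm w, ?_, StrongDual.toWeakDual.apply_symm_apply w⟩
    have : z = f (StrongDual.toWeakDual.symm w) := StrongDual.toWeakDual.injective hz2
    rwa [this] at hz

end AuxRBP

set_option maxHeartbeats 2000000 in
theorem sum_with_approx_injective_wclosed {C : Set (X E →L[ℂ] X E)} (hC : IsIdemBoolAlg C)
    (φ : ℕ → (X E →L[ℂ] X E)) (K : ℝ) (hmem : ∀ n, φ n ∈ C)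
    (hbd : ∀ n, ‖φ n‖ ≤ K) (hnest : ∀ n, Ran (φ (n + 1)) ⊆ Ran (φ n))
    (M : Set (X E)) (hM : M = ⋂ n, Ran (φ n))
    (Y : Submodule ℂ (X E)) (hYc : WClosed (Y : Set (X E)))
    (hYi : CInvariant C (Y : Set (X E))) :
    WClosed ((Y : Set (X E)) + M) := by
  classical
  have hidem : ∀ n x, φ n (φ n x) = φ n x := by
    intro n x
    have h := ContinuousLinearMap.ext_iff.mp (hC.idem (φ n) (hmem n)) x
    simpa using h
  have hRanAnti : Antitone (fun n => Ran (φ n)) := antitone_nat_of_succ_le hnest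
  have hsum_eq : ∀ n, (Y : Set (X E)) + Ran (φ n) = {x | x - φ n x ∈ (Y : Set (X E))} := by
    intro n
    ext x
    constructor
    · intro hx
      rw [Set.mem_add] at hx
      obtain ⟨y, hy, m, hm, rfl⟩ := hx
      have hm' : φ n m = m := hm
      have heq : (y + m) - φ n (y + m) = (ContinuousLinearMap.id ℂ (X E) - φ n) y := by
        simp only [map_add, hm', ContinuousLinearMap.sub_apply, ContinuousLinearMap.id_apply]
        abel
      show (y + m) - φ n (y + m) ∈ (Y : Set (X E))
      rw [heq]
      exact hYi _ (hC.compl_mem _ (hmem n)) y hy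
    · intro hx
      exact Set.mem_add.mpr ⟨x - φ n x, hx, φ n x, hidem n x, by abel⟩
  have key : (Y : Set (X E)) + M = ⋂ n, {x | x - φ n x ∈ (Y : Set (X E))} := by
    apply Set.Subset.antisymm
    · intro x hx
      rw [Set.mem_add] at hx
      obtain ⟨y, hy, m, hm, rfl⟩ := hx
      rw [hM] at hm
      refine Set.mem_iInter.mpr fun n => ?_
      have hmem' : y + m ∈ (Y : Set (X E)) + Ran (φ n) :=
        Set.mem_add.mpr ⟨y, hy, m, Set.mem_iInter.mp hm n, rfl⟩
      rwa [hsum_eq n] at hmem'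
    · intro x hx
      have hx' : ∀ n, x - φ n x ∈ (Y : Set (X E)) := fun n => Set.mem_iInter.mp hx n
      set u : ℕ → WeakDual ℂ E := fun n => StrongDual.toWeakDual (φ n x) with hu
      have hus : ∀ n, u n ∈ WeakDual.toStrongDual ⁻¹' Metric.closedBall (0 : X E) (K * ‖x‖) := by
        intro n
        have h1 : WeakDual.toStrongDual (u n) = φ n x :=
          StrongDual.toWeakDual.symm_apply_apply _
        simp only [Set.mem_preimage, Metric.mem_closedBall, dist_zero_right, h1]
        exact le_trans ((φ n).le_opNorm x)
          (mul_le_mul_of_nonneg_right (hbd n) (norm_nonneg x))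
      have hcomp := WeakDual.isCompact_closedBall (𝕜 := ℂ) (E := E) 0 (K * ‖x‖)
      have hmaple : Filter.map u Filter.atTop ≤
          Filter.principal (WeakDual.toStrongDual ⁻¹' Metric.closedBall (0 : X E) (K * ‖x‖)) :=
        Filter.le_principal_iff.mpr (Filter.mem_map.mpr (Filter.Eventually.of_forall hus))
      obtain ⟨L, -, hL⟩ := hcomp.exists_mapClusterPt hmaple
      set m : X E := StrongDual.toWeakDual.symm L with hmdef
      have hτm : StrongDual.toWeakDual m = L :=
        StrongDual.toWeakDual.apply_symm_apply L
      have hmM : m ∈ M := by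
        rw [hM, Set.mem_iInter]
        intro k
        have hcont : Continuous (fun w : WeakDual ℂ E => w - wmap (φ k) w) :=
          continuous_id.sub (hC.wcont (φ k) (hmem k))
        have hclu : MapClusterPt (L - wmap (φ k) L) Filter.atTop
            ((fun w => w - wmap (φ k) w) ∘ u) :=
          hL.continuousAt_comp hcont.continuousAt
        have hev : ∀ n ≥ k, ((fun w => w - wmap (φ k) w) ∘ u) n = 0 := by
          intro n hn
          have h1 : φ k (φ n x) = φ n x := hRanAnti hn (hidem n x)
          simp only [Function.comp, wmap, hu]
          rw [LinearEquiv.symm_apply_apply, h1, sub_self]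
        have hmem0 : ({0} : Set (WeakDual ℂ E)) ∈
            Filter.map ((fun w => w - wmap (φ k) w) ∘ u) Filter.atTop := by
          rw [Filter.mem_map]
          filter_upwards [Filter.eventually_ge_atTop k] with n hn
          exact Set.mem_singleton_iff.mpr (hev n hn)
        have h0 : L - wmap (φ k) L ∈ closure ({0} : Set (WeakDual ℂ E)) :=
          mem_closure_iff_clusterPt.mpr
            (hclu.clusterPt.mono (Filter.le_principal_iff.mpr hmem0))
        rw [closure_singleton, Set.mem_singleton_iff, sub_eq_zero] at h0
        have h3 : StrongDual.toWeakDual (φ k m) = L := by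
          rw [h0]; simp only [wmap, hmdef]
        show φ k m = m
        apply StrongDual.toWeakDual.injective
        rw [h3, hτm]
      have hxmY : x - m ∈ (Y : Set (X E)) := by
        have hcont : Continuous (fun w : WeakDual ℂ E => StrongDual.toWeakDual x - w) :=
          continuous_const.sub continuous_id
        have hclu : MapClusterPt (StrongDual.toWeakDual x - L) Filter.atTop
            ((fun w => StrongDual.toWeakDual x - w) ∘ u) :=
          hL.continuousAt_comp hcont.continuousAt
        have hmemY : Filter.map ((fun w => StrongDual.toWeakDual x - w) ∘ u) Filter.atTop ≤
            Filter.principal (StrongDual.toWeakDual '' (Y : Set (X E))) := by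
          rw [Filter.le_principal_iff, Filter.mem_map]
          apply Filter.Eventually.of_forall
          intro n
          exact ⟨x - φ n x, hx' n, by simp [hu, map_sub]⟩
        have hcl : StrongDual.toWeakDual x - L ∈
            closure (StrongDual.toWeakDual '' (Y : Set (X E))) :=
          mem_closure_iff_clusterPt.mpr (hclu.clusterPt.mono hmemY)
        rw [hYc.closure_eq] at hcl
        obtain ⟨y, hy, hy2⟩ := hcl
        have hyx : y = x - m := by
          apply StrongDual.toWeakDual.injective
          rw [hy2, map_sub, hτm]
        rwa [hyx] at hy
      exact Set.mem_add.mpr ⟨x - m, hxmY, m, hmM, by abel⟩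
  show IsClosed (StrongDual.toWeakDual '' ((Y : Set (X E)) + M))
  rw [key, Set.image_iInter StrongDual.toWeakDual.bijective]
  apply isClosed_iInter
  intro n
  have hpre : {x : X E | x - φ n x ∈ (Y : Set (X E))} =
      (ContinuousLinearMap.id ℂ (X E) - φ n) ⁻¹' (Y : Set (X E)) := by
    ext x
    simp [ContinuousLinearMap.sub_apply]
  rw [hpre, wmap_image_preimage]
  exact hYc.preimage (hC.wcont _ (hC.compl_mem _ (hmem n)))

end RBP
end

section
/- Let C be a Boolean algebra of commuting weak*-continuous idempotents on a dual Banach space X. If M₁, ..., M_k are approximately C-injective subspaces of X, then their intersection M₁ ∩ ... ∩ M_k is approximately C-injective. -/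
open NormedSpace Filter Pointwise

set_option synthInstance.maxHeartbeats 400000

namespace RBP

variable (E : Type*) [NormedAddCommGroup E] [NormedSpace ℂ E]

variable {E}

variable {C : Set (X E →L[ℂ] X E)}

lemma ran_mul (hC : IsIdemBoolAlg C) {φ ψ : X E →L[ℂ] X E} (hφ : φ ∈ C) (hψ : ψ ∈ C) :
    Ran (φ * ψ) = Ran φ ∩ Ran ψ := by
  ext x
  simp only [Ran, Set.mem_setOf_eq, Set.mem_inter_iff, ContinuousLinearMap.mul_apply]
  constructor
  · intro hx
    have h1 : φ x = x := by
      conv_lhs => rw [← hx]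
      calc φ (φ (ψ x)) = (φ.comp φ) (ψ x) := rfl
        _ = φ (ψ x) := by rw [hC.idem φ hφ]
        _ = x := hx
    have h2 : ψ x = x := by
      conv_lhs => rw [← hx]
      calc ψ (φ (ψ x)) = (ψ.comp φ) (ψ x) := rfl
        _ = (φ.comp ψ) (ψ x) := by rw [hC.comm ψ hψ φ hφ]
        _ = φ ((ψ.comp ψ) x) := rfl
        _ = φ (ψ x) := by rw [hC.idem ψ hψ]
        _ = x := hx
    exact ⟨h1, h2⟩
  · rintro ⟨h1, h2⟩; rw [h2, h1]

lemma noncommProd_mem (hC : IsIdemBoolAlg C) {ι : Type*} (f : ι → (X E →L[ℂ] X E))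
    (s : Finset ι) (hf : ∀ i ∈ s, f i ∈ C) (comm) :
    s.noncommProd f comm ∈ C := by
  refine Finset.noncommProd_induction s f comm (· ∈ C) (fun a b ha hb => hC.mul_mem a ha b hb)
    ?_ hf
  exact hC.id_mem

lemma ran_noncommProd (hC : IsIdemBoolAlg C) {ι : Type*} (f : ι → (X E →L[ℂ] X E))
    (s : Finset ι) (hf : ∀ i ∈ s, f i ∈ C) (comm) :
    Ran (s.noncommProd f comm) = ⋂ i ∈ s, Ran (f i) := by
  induction s using Finset.cons_induction with
  | empty =>
    simp only [Finset.noncommProd_empty, Finset.notMem_empty, Set.iInter_of_empty,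
      Set.iInter_univ]
    ext x; simp [Ran]
  | cons a s ha ih =>
    rw [Finset.noncommProd_cons,
      ran_mul hC (hf a (Finset.mem_cons_self a s))
        (noncommProd_mem hC f s (fun i hi => hf i (Finset.mem_cons_of_mem hi)) _),
      ih (fun i hi => hf i (Finset.mem_cons_of_mem hi))]
    ext x; simp [Finset.mem_cons, or_imp, forall_and]

lemma norm_noncommProd {ι : Type*} (f : ι → (X E →L[ℂ] X E)) (K : ι → ℝ)
    (s : Finset ι) (hK : ∀ i ∈ s, ‖f i‖ ≤ K i) (hK0 : ∀ i ∈ s, 0 ≤ K i) (comm) :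
    ‖s.noncommProd f comm‖ ≤ ∏ i ∈ s, K i := by
  induction s using Finset.cons_induction with
  | empty =>
    simp only [Finset.noncommProd_empty, Finset.prod_empty]
    exact ContinuousLinearMap.norm_id_le
  | cons a s ha ih =>
    rw [Finset.noncommProd_cons, Finset.prod_cons]
    refine le_trans (ContinuousLinearMap.opNorm_comp_le _ _) ?_
    exact mul_le_mul (hK a (Finset.mem_cons_self a s))
      (ih (fun i hi => hK i (Finset.mem_cons_of_mem hi))
        (fun i hi => hK0 i (Finset.mem_cons_of_mem hi)) _)
      (norm_nonneg _) (le_trans (ContinuousLinearMap.opNorm_nonneg (f a)) (hK a (Finset.mem_cons_self a s)))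


theorem approxInj_iInter {C : Set (X E →L[ℂ] X E)} (hC : IsIdemBoolAlg C)
    (k : ℕ) (hk : 0 < k) (M : Fin k → Set (X E)) (h : ∀ i, ApproxInj C (M i)) :
    ApproxInj C (⋂ i, M i) := by
  choose Φ K hKpos hmem hnorm hdec heq using h
  have hcomm : ∀ n : ℕ, ((Finset.univ : Finset (Fin k)) : Set (Fin k)).Pairwise
      (Function.onFun Commute (fun i => Φ i n)) := by
    intro n i _ j _ _
    exact hC.comm _ (hmem i n) _ (hmem j n)
  set ψ : ℕ → (X E →L[ℂ] X E) := fun n =>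
    Finset.univ.noncommProd (fun i => Φ i n) (hcomm n) with hψ
  have hran : ∀ n, Ran (ψ n) = ⋂ i, Ran (Φ i n) := by
    intro n
    rw [hψ, ran_noncommProd hC _ _ (fun i _ => hmem i n)]
    simp
  refine ⟨ψ, ∏ i, K i, Finset.prod_pos (fun i _ => hKpos i), fun n =>
    noncommProd_mem hC _ _ (fun i _ => hmem i n) _, fun n =>
    norm_noncommProd _ K _ (fun i _ => hnorm i n) (fun i _ => (hKpos i).le) _, ?_, ?_⟩
  · intro n
    rw [hran, hran]
    exact Set.iInter_mono (fun i => hdec i n)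
  · calc ⋂ i, M i = ⋂ i, ⋂ n, Ran (Φ i n) := Set.iInter_congr heq
      _ = ⋂ n, ⋂ i, Ran (Φ i n) := Set.iInter_comm _
      _ = ⋂ n, Ran (ψ n) := Set.iInter_congr fun n => (hran n).symm

end RBP
end

section
/- Let C be a Boolean algebra of commuting weak*-continuous idempotents on a dual Banach space X, Y a weak*-closed C-invariant subspace, and M an approximately C-injective subspace. Then Ref_C(Y + M) = Ref_C(Y) + M; consequently, if Y is C-reflexive, then Y + M is C-reflexive. -/
open NormedSpace Filter Pointwise

namespace RBP

variable (E : Type*) [NormedAddCommGroup E] [NormedSpace ℂ E]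

variable {E}

lemma RBP_aux_isClosed_zero {ψ : X E →L[ℂ] X E} (h : WContinuous ψ) :
    IsClosed {z : WeakDual ℂ E | ψ (StrongDual.toWeakDual.symm z) = 0} := by
  have heq : {z : WeakDual ℂ E | ψ (StrongDual.toWeakDual.symm z) = 0}
      = (fun z : WeakDual ℂ E =>
          StrongDual.toWeakDual (ψ (StrongDual.toWeakDual.symm z))) ⁻¹' {0} := by
    ext z
    simp only [Set.mem_setOf_eq, Set.mem_preimage, Set.mem_singleton_iff]
    constructor
    · intro hz; rw [hz]; exact map_zero _
    · intro hz
      have := congrArg StrongDual.toWeakDual.symm hz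
      simpa using this
  rw [heq]
  exact IsClosed.preimage h isClosed_singleton

lemma RBP_aux_isClosed_refC {C : Set (X E →L[ℂ] X E)} (hC : ∀ φ ∈ C, WContinuous φ)
    (Y : Set (X E)) :
    IsClosed {z : WeakDual ℂ E | ∀ ψ ∈ C, (∀ y ∈ Y, ψ y = 0) →
      ψ (StrongDual.toWeakDual.symm z) = 0} := by
  have heq : {z : WeakDual ℂ E | ∀ ψ ∈ C, (∀ y ∈ Y, ψ y = 0) →
      ψ (StrongDual.toWeakDual.symm z) = 0}
      = ⋂ ψ ∈ C, ⋂ (_ : ∀ y ∈ Y, ψ y = 0),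
        {z : WeakDual ℂ E | ψ (StrongDual.toWeakDual.symm z) = 0} := by
    ext z; simp [Set.mem_iInter]
  rw [heq]
  exact isClosed_biInter fun ψ hψ => isClosed_iInter fun _ => RBP_aux_isClosed_zero (hC ψ hψ)

lemma RBP_aux_isClosed_fix {φ : X E →L[ℂ] X E} (h : WContinuous φ) :
    IsClosed {z : WeakDual ℂ E |
      StrongDual.toWeakDual (φ (StrongDual.toWeakDual.symm z)) = z} :=
  isClosed_eq h continuous_id

lemma RBP_aux_clusterPt_mem {α : Type*} [TopologicalSpace α] {u : ℕ → α} {p : α} {S : Set α}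
    (hp : MapClusterPt p atTop u) (hS : IsClosed S) (h : ∀ᶠ n in atTop, u n ∈ S) : p ∈ S := by
  have h1 : Filter.map u atTop ≤ Filter.principal S := le_principal_iff.2 (mem_map.2 h)
  have h2 : ClusterPt p (Filter.principal S) := ClusterPt.mono hp h1
  exact hS.closure_subset (mem_closure_iff_clusterPt.2 h2)

theorem refC_sum_approx_injective {C : Set (X E →L[ℂ] X E)} (hC : IsIdemBoolAlg C)
    (Y : Submodule ℂ (X E)) (hYc : WClosed (Y : Set (X E)))
    (hYi : CInvariant C (Y : Set (X E)))
    (M : Set (X E)) (hM : ApproxInj C M) :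
    RefC C ((Y : Set (X E)) + M) = RefC C (Y : Set (X E)) + M ∧
      (RefC C (Y : Set (X E)) = (Y : Set (X E)) →
        RefC C ((Y : Set (X E)) + M) = (Y : Set (X E)) + M) := by
  obtain ⟨φ, K, hK, hφC, hφK, hdec, hMeq⟩ := hM
  -- ranges are antitone
  have hdec' : ∀ k n, k ≤ n → Ran (φ n) ⊆ Ran (φ k) := by
    intro k n hkn
    induction n with
    | zero => simp_all
    | succ n ih =>
      rcases Nat.lt_or_ge k (n + 1) with h | h
      · exact (hdec n).trans (ih (Nat.lt_succ_iff.mp h))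
      · have : k = n + 1 := le_antisymm hkn h
        subst this; exact subset_rfl
  have h0M : (0 : X E) ∈ M := by
    rw [hMeq]
    exact Set.mem_iInter.2 fun n => by simp [Ran]
  have hmain : RefC C ((Y : Set (X E)) + M) = RefC C (Y : Set (X E)) + M := by
    apply Set.Subset.antisymm
    · -- hard direction
      intro x hx
      -- the complements (1 - φ n) push x into RefC C Y
      have hRef : ∀ n, x - φ n x ∈ RefC C (Y : Set (X E)) := by
        intro n ψ hψ hkill
        have hmem : ψ.comp (ContinuousLinearMap.id ℂ (X E) - φ n) ∈ C :=
          hC.mul_mem ψ hψ _ (hC.compl_mem (φ n) (hφC n))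
        have hkills : ∀ z ∈ (Y : Set (X E)) + M,
            (ψ.comp (ContinuousLinearMap.id ℂ (X E) - φ n)) z = 0 := by
          rintro z ⟨y, hy, m, hm, rfl⟩
          have hmn : φ n m = m := by
            have := (hMeq ▸ hm : m ∈ ⋂ k, Ran (φ k))
            exact Set.mem_iInter.1 this n
          have hys : y + m - φ n (y + m) = y - φ n y := by
            rw [map_add, hmn]; abel
          have hmemY : y - φ n y ∈ (Y : Set (X E)) :=
            Y.sub_mem hy (hYi (φ n) (hφC n) y hy)
          simp only [ContinuousLinearMap.comp_apply, ContinuousLinearMap.sub_apply,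
            ContinuousLinearMap.id_apply]
          rw [hys]
          exact hkill _ hmemY
        have := hx _ hmem hkills
        simpa only [ContinuousLinearMap.comp_apply, ContinuousLinearMap.sub_apply,
          ContinuousLinearMap.id_apply] using this
      -- the sequence φ n x lives in a weak* compact ball
      set u : ℕ → WeakDual ℂ E := fun n => StrongDual.toWeakDual (φ n x) with hu
      set s : Set (WeakDual ℂ E) :=
        WeakDual.toStrongDual ⁻¹' Metric.closedBall 0 (K * ‖x‖) with hs
      have hcompact : IsCompact s := WeakDual.isCompact_closedBall (𝕜 := ℂ) 0 (K * ‖x‖)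
      have hus : ∀ n, u n ∈ s := by
        intro n
        simp only [hs, hu, Set.mem_preimage, Metric.mem_closedBall, dist_zero_right]
        calc ‖φ n x‖ ≤ ‖φ n‖ * ‖x‖ := (φ n).le_opNorm x
          _ ≤ K * ‖x‖ := mul_le_mul_of_nonneg_right (hφK n) (norm_nonneg x)
      have hle : Filter.map u atTop ≤ Filter.principal s :=
        le_principal_iff.2 (mem_map.2 (Filter.Eventually.of_forall hus))
      obtain ⟨p, hps, hp⟩ := hcompact.exists_clusterPt hle
      have hcp : MapClusterPt p atTop u := hp
      -- the cluster point gives the element of M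
      set m : X E := StrongDual.toWeakDual.symm p with hm
      have hpm : StrongDual.toWeakDual m = p := by simp [hm]
      have hmM : m ∈ M := by
        rw [hMeq, Set.mem_iInter]
        intro k
        have hclosed := RBP_aux_isClosed_fix (hC.wcont (φ k) (hφC k))
        have hev : ∀ᶠ n in atTop, u n ∈ {z : WeakDual ℂ E |
            StrongDual.toWeakDual (φ k (StrongDual.toWeakDual.symm z)) = z} := by
          refine Filter.eventually_atTop.2 ⟨k, fun n hn => ?_⟩
          have hfix : φ k (φ n x) = φ n x := by
            have : φ n x ∈ Ran (φ n) := by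
              simp only [Ran, Set.mem_setOf_eq]
              have := hC.idem (φ n) (hφC n)
              calc φ n (φ n x) = ((φ n).comp (φ n)) x := rfl
                _ = φ n x := by rw [this]
            exact hdec' k n hn this
          show StrongDual.toWeakDual (φ k (StrongDual.toWeakDual.symm (u n)))
              = u n
          simp only [hu, LinearEquiv.symm_apply_apply]
          rw [hfix]
        have := RBP_aux_clusterPt_mem hcp hclosed hev
        have : φ k m = m := by
          have h2 := congrArg StrongDual.toWeakDual.symm this
          simpa [hm] using h2
        exact this
      -- x - m is a weak* cluster point of the sequence x - φ n x, which is in RefC C Y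
      have hsub : MapClusterPt (StrongDual.toWeakDual x - p) atTop
          (fun n => StrongDual.toWeakDual x - u n) := by
        have hcont : ContinuousAt (fun z : WeakDual ℂ E =>
            StrongDual.toWeakDual x - z) p :=
          (continuous_const.sub continuous_id).continuousAt
        have htend : Filter.Tendsto (fun z : WeakDual ℂ E =>
            StrongDual.toWeakDual x - z) (Filter.map u atTop)
            (Filter.map (fun n => StrongDual.toWeakDual x - u n) atTop) := by
          rw [Filter.tendsto_map'_iff]
          exact Filter.tendsto_map
        exact ClusterPt.map hcp hcont htend
      have hxmRef : x - m ∈ RefC C (Y : Set (X E)) := by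
        set S : Set (WeakDual ℂ E) := {z : WeakDual ℂ E | ∀ ψ ∈ C,
            (∀ y ∈ (Y : Set (X E)), ψ y = 0) →
            ψ (StrongDual.toWeakDual.symm z) = 0} with hS
        have hSclosed : IsClosed S := RBP_aux_isClosed_refC hC.wcont _
        have hev : ∀ᶠ n in atTop, (StrongDual.toWeakDual x - u n) ∈ S := by
          refine Filter.Eventually.of_forall fun n => ?_
          intro ψ hψ hkill
          have heq : StrongDual.toWeakDual.symm
              (StrongDual.toWeakDual x - u n) = x - φ n x := rfl
          rw [heq]
          exact hRef n ψ hψ hkill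
        have hmem := RBP_aux_clusterPt_mem hsub hSclosed hev
        intro ψ hψ hkill
        have heq2 : StrongDual.toWeakDual.symm
            (StrongDual.toWeakDual x - p) = x - m := rfl
        have := hmem ψ hψ hkill
        rwa [heq2] at this
      exact ⟨x - m, hxmRef, m, hmM, by simp⟩
    · -- easy direction
      rintro x ⟨y, hy, m, hm, rfl⟩
      intro ψ hψ hkill
      have h1 : ψ y = 0 :=
        hy ψ hψ fun z hz => hkill z ⟨z, hz, 0, h0M, by simp⟩
      have h2 : ψ m = 0 := hkill m ⟨0, Y.zero_mem, m, hm, by simp⟩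
      rw [map_add, h1, h2, add_zero]
  exact ⟨hmain, fun h => by rw [hmain, h]⟩

end RBP
end

section
/- Let C be a Boolean algebra of commuting weak*-continuous idempotents on a dual Banach space X and let V be a C-decomposable subspace with associated sequences (φₙ) of idempotents and (Wₙ) of C-injective subspaces. Then V = ⋂ₙ (ran φₙ + Wₙ) = limsupₙ Wₙ + limsupₙ ran φₙ, where limsup of a sequence of closed sets is the set of weak* cluster points of sequences (xₙ) with xₙ in the n-th set. -/
open NormedSpace Filter Pointwise

namespace RBP

variable (E : Type*) [NormedAddCommGroup E] [NormedSpace ℂ E]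

variable {E}

lemma wlimsup_subset_of_wclosed {V : Set (X E)} (hVc : WClosed V) {M : ℕ → Set (X E)}
    (h : ∀ n, M n ⊆ V) : WLimsup M ⊆ V := by
  rintro x ⟨s, hs, hcl⟩
  have h1 : StrongDual.toWeakDual x ∈ closure (StrongDual.toWeakDual '' V) := by
    rw [mem_closure_iff_clusterPt]
    exact hcl.clusterPt.mono (Filter.le_principal_iff.mpr (Filter.mem_map.mpr
      (Filter.Eventually.of_forall fun n => ⟨s n, h n (hs n), rfl⟩)))
  rw [hVc.closure_eq] at h1
  obtain ⟨v, hv, hvx⟩ := h1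
  rwa [← StrongDual.toWeakDual.injective hvx]

theorem decomposable_structure {C : Set (X E →L[ℂ] X E)} (hC : IsIdemBoolAlg C)
    (V : Submodule ℂ (X E)) (hVc : WClosed (V : Set (X E)))
    (φ : ℕ → (X E →L[ℂ] X E)) (W : ℕ → Set (X E)) (K : ℝ) (hK : 0 < K)
    (hφ : ∀ n, φ n ∈ C) (hW : ∀ n, ∃ ψ ∈ C, W n = Ran ψ) (hbd : ∀ n, ‖φ n‖ ≤ K)
    (hsub : ∀ n, (V : Set (X E)) ⊆ Ran (φ n) + W n) (hWV : ∀ n, W n ⊆ (V : Set (X E)))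
    (hls : WLimsup (fun n => Ran (φ n)) ⊆ (V : Set (X E))) :
    (V : Set (X E)) = ⋂ n, (Ran (φ n) + W n) ∧
      (V : Set (X E)) = WLimsup W + WLimsup (fun n => Ran (φ n)) := by
  have hWl : WLimsup W ⊆ (V : Set (X E)) := wlimsup_subset_of_wclosed hVc hWV
  -- key construction
  have key : ∀ x ∈ ⋂ n, (Ran (φ n) + W n),
      ∃ y, y ∈ WLimsup (fun n => Ran (φ n)) ∧ x - y ∈ WLimsup W := by
    intro x hx
    have hdiff : ∀ n, x - φ n x ∈ W n := by
      intro n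
      obtain ⟨ψ, hψC, hWn⟩ := hW n
      obtain ⟨r, hr, w, hw, hrw⟩ := Set.mem_add.mp (Set.mem_iInter.mp hx n)
      have hφr : φ n r = r := hr
      have hψw : ψ w = w := by rw [hWn] at hw; exact hw
      have hcommw : ψ (φ n w) = φ n w := by
        have := DFunLike.congr_fun (hC.comm ψ hψC (φ n) (hφ n)) w
        simp only [ContinuousLinearMap.comp_apply] at this
        rw [this, hψw]
      have hxw : x - φ n x = w - φ n w := by
        rw [← hrw, map_add, hφr]; abel
      rw [hxw, hWn]
      show ψ (w - φ n w) = w - φ n w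
      rw [map_sub, hψw, hcommw]
    set u : ℕ → WeakDual ℂ E := fun n => StrongDual.toWeakDual (φ n x) with hu
    have hub : ∀ n, u n ∈ WeakDual.toStrongDual ⁻¹' Metric.closedBall 0 (K * ‖x‖) := by
      intro n
      simp only [Set.mem_preimage, Metric.mem_closedBall, dist_zero_right]
      calc ‖WeakDual.toStrongDual (u n)‖ = ‖φ n x‖ := rfl
        _ ≤ ‖φ n‖ * ‖x‖ := (φ n).le_opNorm x
        _ ≤ K * ‖x‖ := mul_le_mul_of_nonneg_right (hbd n) (norm_nonneg x)
    obtain ⟨z, _, hcl⟩ :=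
      (WeakDual.isCompact_closedBall (𝕜 := ℂ) (E := E) 0 (K * ‖x‖)).exists_mapClusterPt
        (u := u) (f := atTop)
        (Filter.le_principal_iff.mpr (Filter.mem_map.mpr (Filter.Eventually.of_forall hub)))
    set y : X E := StrongDual.toWeakDual.symm z with hy
    have hyz : StrongDual.toWeakDual y = z := StrongDual.toWeakDual.apply_symm_apply z
    have hfix : ∀ n, φ n x ∈ Ran (φ n) := by
      intro n
      show φ n (φ n x) = φ n x
      have := DFunLike.congr_fun (hC.idem (φ n) (hφ n)) x
      simpa only [ContinuousLinearMap.comp_apply] using this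
    refine ⟨y, ⟨fun n => φ n x, hfix, by rwa [hyz]⟩,
      ⟨fun n => x - φ n x, hdiff, ?_⟩⟩
    have hc : ContinuousAt (fun w : WeakDual ℂ E => StrongDual.toWeakDual x - w) z :=
      (continuous_const.sub continuous_id).continuousAt
    have h2 := hcl.continuousAt_comp hc
    have heq : ((fun w : WeakDual ℂ E => StrongDual.toWeakDual x - w) ∘ u) =
        fun n => StrongDual.toWeakDual (x - φ n x) := by
      funext n; simp [u, map_sub]
    rw [heq] at h2
    have heq2 : StrongDual.toWeakDual (x - y) = StrongDual.toWeakDual x - z := by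
      rw [map_sub, hyz]
    rw [heq2]
    exact h2
  constructor
  · apply Set.Subset.antisymm
    · exact fun x hx => Set.mem_iInter.mpr fun n => hsub n hx
    · intro x hx
      obtain ⟨y, hy1, hy2⟩ := key x hx
      have : (x - y) + y ∈ V := V.add_mem (hWl hy2) (hls hy1)
      rwa [sub_add_cancel] at this
  · apply Set.Subset.antisymm
    · intro x hx
      obtain ⟨y, hy1, hy2⟩ := key x (Set.mem_iInter.mpr fun n => hsub n hx)
      exact ⟨x - y, hy2, y, hy1, sub_add_cancel x y⟩
    · intro x hx
      obtain ⟨a, ha, b, hb, hab⟩ := hx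
      rw [← hab]
      exact V.add_mem (hWl ha) (hls hb)

end RBP
end

section
/- Let C be a Boolean algebra of commuting weak*-continuous idempotents on a dual Banach space X. Every C-decomposable subspace of X is C-invariant and C-reflexive. -/
open NormedSpace Filter Pointwise

namespace RBP

variable (E : Type*) [NormedAddCommGroup E] [NormedSpace ℂ E]

variable {E}

/-- Every norm-bounded sequence in the dual has a weak* cluster point (Banach–Alaoglu). -/
lemma exists_wclusterPt (s : ℕ → X E) (R : ℝ) (hR : ∀ n, ‖s n‖ ≤ R) :
    ∃ x : X E, MapClusterPt (StrongDual.toWeakDual x) atTop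
      (fun n => StrongDual.toWeakDual (s n)) := by
  have hc := WeakDual.isCompact_closedBall (0 : StrongDual ℂ E) R
  have hle : Filter.map (fun n => StrongDual.toWeakDual (s n)) atTop ≤
      Filter.principal (WeakDual.toStrongDual ⁻¹' Metric.closedBall 0 R) := by
    rw [Filter.le_principal_iff, Filter.mem_map]
    refine Filter.Eventually.of_forall fun n => ?_
    show s n ∈ Metric.closedBall (0 : StrongDual ℂ E) R
    exact mem_closedBall_zero_iff.2 (hR n)
  obtain ⟨y, _, hcl⟩ := hc hle
  refine ⟨StrongDual.toWeakDual.symm y, ?_⟩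
  rw [LinearEquiv.apply_symm_apply]
  exact hcl

/-- A weak* cluster point of a sequence in a weak*-closed set belongs to the set. -/
lemma mem_of_wclusterPt {V : Set (X E)} (hVc : WClosed V) {t : ℕ → X E} (ht : ∀ n, t n ∈ V)
    {z : X E} (hz : MapClusterPt (StrongDual.toWeakDual z) atTop
      (fun n => StrongDual.toWeakDual (t n))) : z ∈ V := by
  have h1 : StrongDual.toWeakDual z ∈ closure (StrongDual.toWeakDual '' V) := by
    rw [mem_closure_iff_clusterPt]
    refine hz.clusterPt.mono ?_
    rw [Filter.le_principal_iff, Filter.mem_map]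
    exact Filter.Eventually.of_forall fun n => Set.mem_image_of_mem _ (ht n)
  rw [hVc.closure_eq] at h1
  obtain ⟨w, hw, hweq⟩ := h1
  rwa [StrongDual.toWeakDual.injective hweq] at hw

theorem decomposable_invariant_reflexive {C : Set (X E →L[ℂ] X E)} (hC : IsIdemBoolAlg C)
    (V : Set (X E)) (hVsub : ∃ p : Submodule ℂ (X E), V = (p : Set (X E)))
    (hV : Decomp C V) :
    CInvariant C V ∧ RefC C V = V := by
  obtain ⟨p, hp⟩ := hVsub
  obtain ⟨hVc, φ, W, K, hK, hφC, hW, hφK, hdec, hWV, hlim⟩ := hV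
  choose ψ hψC hWeq using hW
  -- pointwise versions of algebraic axioms
  have hcomm : ∀ α ∈ C, ∀ β ∈ C, ∀ x : X E, α (β x) = β (α x) := by
    intro α hα β hβ x
    have h := hC.comm α hα β hβ
    have := ContinuousLinearMap.ext_iff.1 h x
    simpa using this
  have hidem : ∀ α ∈ C, ∀ x : X E, α (α x) = α x := by
    intro α hα x
    have := ContinuousLinearMap.ext_iff.1 (hC.idem α hα) x
    simpa using this
  -- membership in V is a submodule membership
  have hadd : ∀ a b : X E, a ∈ V → b ∈ V → a + b ∈ V := by
    intro a b ha hb; rw [hp] at *; exact p.add_mem ha hb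
  have hsub : ∀ a b : X E, a ∈ V → b ∈ V → a - b ∈ V := by
    intro a b ha hb; rw [hp] at *; exact p.sub_mem ha hb
  -- key lemma: if z differs from a bounded sequence through the ranges by elements of V,
  -- then z ∈ V
  have key : ∀ (z : X E) (s : ℕ → X E) (R : ℝ), (∀ n, s n ∈ Ran (φ n)) →
      (∀ n, ‖s n‖ ≤ R) → (∀ n, z - s n ∈ V) → z ∈ V := by
    intro z s R hsR hbd hzs
    obtain ⟨x, hx⟩ := exists_wclusterPt s R hbd
    have hxV : x ∈ V := hlim ⟨s, hsR, hx⟩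
    -- z - x is a weak* cluster point of the sequence z - s n ∈ V
    have hcont : Continuous fun w : WeakDual ℂ E => StrongDual.toWeakDual z - w :=
      continuous_const.sub continuous_id
    have h2 := hx.continuousAt_comp hcont.continuousAt
    have h3 : MapClusterPt (StrongDual.toWeakDual (z - x)) atTop
        (fun n => StrongDual.toWeakDual (z - s n)) := by
      have e1 : StrongDual.toWeakDual (z - x)
          = StrongDual.toWeakDual z - StrongDual.toWeakDual x := map_sub _ _ _
      rw [e1]
      convert h2 using 1
      funext n
      exact map_sub _ _ _
    have hzxV : z - x ∈ V := mem_of_wclusterPt hVc hzs h3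
    have : (z - x) + x ∈ V := hadd _ _ hzxV hxV
    simpa using this
  -- ψ n x ∈ V for all x
  have hψV : ∀ n (x : X E), ψ n x ∈ V := by
    intro n x
    apply hWV n
    rw [hWeq n]
    exact hidem (ψ n) (hψC n) x
  -- invariance
  have hinv : CInvariant C V := by
    intro θ hθ v hv
    refine key (θ v) (fun n => θ (φ n v)) (‖θ‖ * (K * ‖v‖)) ?_ ?_ ?_
    · intro n
      show φ n (θ (φ n v)) = θ (φ n v)
      rw [hcomm (φ n) (hφC n) θ hθ, hidem (φ n) (hφC n)]
    · intro n
      calc ‖θ (φ n v)‖ ≤ ‖θ‖ * ‖φ n v‖ := θ.le_opNorm _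
        _ ≤ ‖θ‖ * (K * ‖v‖) := by
            refine mul_le_mul_of_nonneg_left ?_ (norm_nonneg θ)
            calc ‖φ n v‖ ≤ ‖φ n‖ * ‖v‖ := (φ n).le_opNorm v
              _ ≤ K * ‖v‖ := mul_le_mul_of_nonneg_right (hφK n) (norm_nonneg v)
    · intro n
      obtain ⟨a, ha, w, hw, haw⟩ := Set.mem_add.1 (hdec n hv)
      have hψw : ψ n w = w := by rw [hWeq n] at hw; exact hw
      have hφa : φ n a = a := ha
      have e0 : θ v - θ (φ n v) = θ (w - φ n w) := by
        rw [← map_sub]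
        congr 1
        rw [← haw, map_add, hφa]
        abel
      rw [e0]
      apply hWV n
      rw [hWeq n]
      show ψ n (θ (w - φ n w)) = θ (w - φ n w)
      rw [hcomm (ψ n) (hψC n) θ hθ]
      congr 1
      rw [map_sub, hcomm (ψ n) (hψC n) (φ n) (hφC n), hψw]
  refine ⟨hinv, ?_⟩
  apply Set.Subset.antisymm
  · -- RefC C V ⊆ V
    intro x hx
    -- the operator (1 - φ n) ∘ (1 - ψ n) lies in C and annihilates V
    set I := ContinuousLinearMap.id ℂ (X E) with hI
    have hθC : ∀ n, ((I - φ n).comp (I - ψ n)) ∈ C := fun n =>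
      hC.mul_mem _ (hC.compl_mem _ (hφC n)) _ (hC.compl_mem _ (hψC n))
    have hkill : ∀ n, ∀ v ∈ V, ((I - φ n).comp (I - ψ n)) v = 0 := by
      intro n v hv
      obtain ⟨a, ha, w, hw, haw⟩ := Set.mem_add.1 (hdec n hv)
      have hψw : ψ n w = w := by rw [hWeq n] at hw; exact hw
      have hφa : φ n a = a := ha
      show (I - φ n) ((I - ψ n) v) = 0
      have e1 : (I - ψ n) v = a - ψ n a := by
        have h1 : (I - ψ n) v = v - ψ n v := by
          simp [hI, ContinuousLinearMap.sub_apply]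
        rw [h1, ← haw, map_add, hψw]
        abel
      rw [e1]
      have h2 : (I - φ n) (a - ψ n a) = (a - ψ n a) - φ n (a - ψ n a) := by
        simp [hI, ContinuousLinearMap.sub_apply]
      rw [h2, map_sub, hφa, hcomm (φ n) (hφC n) (ψ n) (hψC n), hφa]
      abel
    have hθx : ∀ n, ((I - φ n).comp (I - ψ n)) x = 0 := fun n =>
      hx _ (hθC n) (hkill n)
    -- hence x - φ n x = ψ n x - φ n (ψ n x) ∈ V
    have hdiff : ∀ n, x - φ n x ∈ V := by
      intro n
      have h0 := hθx n
      have e2 : ((I - φ n).comp (I - ψ n)) x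
          = (x - φ n x) - (ψ n x - φ n (ψ n x)) := by
        show (I - φ n) ((I - ψ n) x) = _
        have h1 : (I - ψ n) x = x - ψ n x := by
          simp [hI, ContinuousLinearMap.sub_apply]
        rw [h1]
        have h2 : (I - φ n) (x - ψ n x) = (x - ψ n x) - φ n (x - ψ n x) := by
          simp [hI, ContinuousLinearMap.sub_apply]
        rw [h2, map_sub]
        abel
      rw [e2, sub_eq_zero] at h0
      rw [h0]
      exact hsub _ _ (hψV n x) (hinv (φ n) (hφC n) _ (hψV n x))
    refine key x (fun n => φ n x) (K * ‖x‖) ?_ ?_ hdiff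
    · intro n
      exact hidem (φ n) (hφC n) x
    · intro n
      calc ‖φ n x‖ ≤ ‖φ n‖ * ‖x‖ := (φ n).le_opNorm x
        _ ≤ K * ‖x‖ := mul_le_mul_of_nonneg_right (hφK n) (norm_nonneg x)
  · -- V ⊆ RefC C V
    intro v hv θ _ hθ0
    exact hθ0 v hv

end RBP
end

section
/- Let C be a Boolean algebra of commuting weak*-continuous idempotents on a dual Banach space X, Y a weak*-closed C-invariant subspace, and V a C-decomposable subspace. Then Ref_C(Y + V) equals the weak* closure of Ref_C(Y) + V. In particular, if Y is C-reflexive, then the weak* closure of Y + V is C-reflexive. -/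
open NormedSpace Filter Pointwise

namespace RBP

variable (E : Type*) [NormedAddCommGroup E] [NormedSpace ℂ E]

variable {E}

attribute [local instance 2000] instTopologicalSpaceWeakDual

lemma img_ker (φ : X E →L[ℂ] X E) :
    StrongDual.toWeakDual '' {z : X E | φ z = 0} =
      {x : WeakDual ℂ E |
        StrongDual.toWeakDual (φ (StrongDual.toWeakDual.symm x)) = 0} := by
  ext x
  simp only [Set.mem_image, Set.mem_setOf_eq]
  constructor
  · rintro ⟨z, hz, rfl⟩
    rw [LinearEquiv.symm_apply_apply, LinearEquiv.map_eq_zero_iff]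
    exact hz
  · intro h
    refine ⟨StrongDual.toWeakDual.symm x, ?_, LinearEquiv.apply_symm_apply _ _⟩
    rwa [LinearEquiv.map_eq_zero_iff] at h

lemma wclosed_ker {φ : X E →L[ℂ] X E} (hφ : WContinuous φ) :
    WClosed {z : X E | φ z = 0} := by
  rw [WClosed, img_ker]
  have : {x : WeakDual ℂ E |
      StrongDual.toWeakDual (φ (StrongDual.toWeakDual.symm x)) = 0} =
      (fun x : WeakDual ℂ E =>
        StrongDual.toWeakDual (φ (StrongDual.toWeakDual.symm x))) ⁻¹' {0} := rfl
  rw [this]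
  exact isClosed_singleton.preimage hφ

lemma subset_wclosure (S : Set (X E)) : S ⊆ WClosure S := by
  intro x hx
  show StrongDual.toWeakDual x ∈ closure (StrongDual.toWeakDual '' S)
  exact subset_closure ⟨x, hx, rfl⟩

lemma wclosure_subset {S T : Set (X E)} (hT : WClosed T) (h : S ⊆ T) : WClosure S ⊆ T := by
  intro x hx
  have hx' : StrongDual.toWeakDual x ∈ closure (StrongDual.toWeakDual '' T) :=
    closure_mono (Set.image_mono h) hx
  rw [hT.closure_eq] at hx'
  obtain ⟨z, hz, hzx⟩ := hx'
  rwa [← StrongDual.toWeakDual.injective hzx]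

lemma wclosed_refC {C : Set (X E →L[ℂ] X E)} (hw : ∀ φ ∈ C, WContinuous φ) (S : Set (X E)) :
    WClosed (RefC C S) := by
  have himg : StrongDual.toWeakDual '' RefC C S =
      ⋂ φ ∈ {φ : X E →L[ℂ] X E | φ ∈ C ∧ ∀ y ∈ S, φ y = 0},
        {x : WeakDual ℂ E |
          StrongDual.toWeakDual (φ (StrongDual.toWeakDual.symm x)) = 0} := by
    ext x
    simp only [Set.mem_image, Set.mem_iInter, Set.mem_setOf_eq]
    constructor
    · rintro ⟨z, hz, rfl⟩ φ ⟨hφ, hφS⟩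
      rw [LinearEquiv.symm_apply_apply, LinearEquiv.map_eq_zero_iff]
      exact hz φ hφ hφS
    · intro h
      refine ⟨StrongDual.toWeakDual.symm x, fun φ hφ hφS => ?_,
        LinearEquiv.apply_symm_apply _ _⟩
      have := h φ ⟨hφ, hφS⟩
      rwa [LinearEquiv.map_eq_zero_iff] at this
  rw [WClosed, himg]
  refine isClosed_biInter fun φ hφ => ?_
  have : {x : WeakDual ℂ E |
      StrongDual.toWeakDual (φ (StrongDual.toWeakDual.symm x)) = 0} =
      (fun x : WeakDual ℂ E =>
        StrongDual.toWeakDual (φ (StrongDual.toWeakDual.symm x))) ⁻¹' {0} := rfl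
  rw [this]
  exact isClosed_singleton.preimage (hw φ hφ.1)

lemma refC_mono {C : Set (X E →L[ℂ] X E)} {S T : Set (X E)} (h : S ⊆ T) :
    RefC C S ⊆ RefC C T :=
  fun x hx φ hφ hT => hx φ hφ (fun y hy => hT y (h hy))

lemma refC_wclosure {C : Set (X E →L[ℂ] X E)} (hw : ∀ φ ∈ C, WContinuous φ) (S : Set (X E)) :
    RefC C (WClosure S) = RefC C S := by
  apply Set.Subset.antisymm
  · intro x hx φ hφ hS
    exact hx φ hφ (fun y hy => wclosure_subset (wclosed_ker (hw φ hφ)) hS hy)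
  · exact refC_mono (subset_wclosure S)


set_option maxHeartbeats 1000000 in
theorem refC_sum_decomposable {C : Set (X E →L[ℂ] X E)} (hC : IsIdemBoolAlg C)
    (Y : Submodule ℂ (X E)) (hYc : WClosed (Y : Set (X E)))
    (hYi : CInvariant C (Y : Set (X E)))
    (V : Set (X E)) (hVsub : ∃ p : Submodule ℂ (X E), V = (p : Set (X E)))
    (hV : Decomp C V) :
    RefC C ((Y : Set (X E)) + V) = WClosure (RefC C (Y : Set (X E)) + V) ∧
      (RefC C (Y : Set (X E)) = (Y : Set (X E)) →
        RefC C (WClosure ((Y : Set (X E)) + V)) = WClosure ((Y : Set (X E)) + V)) := by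
  obtain ⟨pV, rfl⟩ := hVsub
  have hwc := hC.wcont
  have hsub : RefC C (Y : Set (X E)) + (pV : Set (X E)) ⊆
      RefC C ((Y : Set (X E)) + (pV : Set (X E))) := by
    intro z hz
    rw [Set.mem_add] at hz
    obtain ⟨a, ha, v, hv, rfl⟩ := hz
    intro χ hχ hkill
    have hY0 : ∀ y ∈ (Y : Set (X E)), χ y = 0 := by
      intro y hy
      have hmem : y + (0 : X E) ∈ (Y : Set (X E)) + (pV : Set (X E)) :=
        Set.add_mem_add hy pV.zero_mem
      simpa using hkill _ hmem
    have hv0 : χ v = 0 := by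
      have hmem : (0 : X E) + v ∈ (Y : Set (X E)) + (pV : Set (X E)) :=
        Set.add_mem_add Y.zero_mem hv
      simpa using hkill _ hmem
    rw [map_add, ha χ hχ hY0, hv0, add_zero]
  have hmain : RefC C ((Y : Set (X E)) + (pV : Set (X E))) =
      WClosure (RefC C (Y : Set (X E)) + (pV : Set (X E))) := by
    apply Set.Subset.antisymm
    · intro x hx
      obtain ⟨hVc, φ, W, K, hK, hφC, hWspec, hφK, hsplit, hWV, hlim⟩ := hV
      have hsK : ∀ n, φ n x ∈ Metric.closedBall (0 : X E) (K * ‖x‖) := by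
        intro n
        rw [mem_closedBall_zero_iff]
        exact ((φ n).le_opNorm x).trans (mul_le_mul_of_nonneg_right (hφK n) (norm_nonneg x))
      have hcpt : IsCompact (WeakDual.toStrongDual ⁻¹' Metric.closedBall (0 : X E) (K * ‖x‖)) :=
        WeakDual.isCompact_closedBall (𝕜 := ℂ) (0 : X E) (K * ‖x‖)
      have hmap : Filter.map (fun n => StrongDual.toWeakDual (φ n x)) Filter.atTop ≤
          Filter.principal (WeakDual.toStrongDual ⁻¹' Metric.closedBall (0 : X E) (K * ‖x‖)) := by
        rw [Filter.le_principal_iff, Filter.mem_map]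
        exact Filter.univ_mem' hsK
      obtain ⟨q, -, hq⟩ := hcpt.exists_mapClusterPt hmap
      obtain ⟨p, hqp⟩ : ∃ p : X E, StrongDual.toWeakDual p = q :=
        ⟨StrongDual.toWeakDual.symm q, LinearEquiv.apply_symm_apply _ _⟩
      have hpV : p ∈ (pV : Set (X E)) := by
        apply hlim
        refine ⟨fun n => φ n x, fun n => ?_, ?_⟩
        · show φ n (φ n x) = φ n x
          have := congrArg (fun f : X E →L[ℂ] X E => f x) (hC.idem (φ n) (hφC n))
          simpa using this
        · rwa [hqp]
      have hdec : ∀ n, x - φ n x ∈ RefC C (Y : Set (X E)) + (pV : Set (X E)) := by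
        intro n
        obtain ⟨ψ, hψC, hWn⟩ := hWspec n
        have hψidem : ∀ z, ψ (ψ z) = ψ z := by
          intro z
          have := congrArg (fun f : X E →L[ℂ] X E => f z) (hC.idem ψ hψC)
          simpa using this
        have hkey : (x - φ n x - ψ (x - φ n x)) + ψ (x - φ n x) = x - φ n x := by abel
        rw [← hkey]
        apply Set.add_mem_add
        · intro χ hχ hχY
          set e := ContinuousLinearMap.id ℂ (X E) with he
          have hθC : χ.comp ((e - ψ).comp (e - φ n)) ∈ C :=
            hC.mul_mem _ hχ _ (hC.mul_mem _ (hC.compl_mem ψ hψC) _ (hC.compl_mem _ (hφC n)))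
          have hθkill : ∀ w ∈ (Y : Set (X E)) + (pV : Set (X E)),
              (χ.comp ((e - ψ).comp (e - φ n))) w = 0 := by
            intro w hw
            rw [Set.mem_add] at hw
            obtain ⟨y, hy, v, hv, rfl⟩ := hw
            have hv' := hsplit n hv
            rw [Set.mem_add] at hv'
            obtain ⟨r, hr, w', hw', hrw⟩ := hv'
            have hrfix : φ n r = r := hr
            have hw'fix : ψ w' = w' := by rw [hWn] at hw'; exact hw'
            have hcommpt : ψ (φ n w') = φ n (ψ w') := by
              have := congrArg (fun f : X E →L[ℂ] X E => f w') (hC.comm ψ hψC (φ n) (hφC n))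
              simpa using this
            have hyY : y - φ n y ∈ Y := Y.sub_mem hy (hYi (φ n) (hφC n) y hy)
            have hyY2 : (y - φ n y) - ψ (y - φ n y) ∈ Y :=
              Y.sub_mem hyY (hYi ψ hψC _ hyY)
            have h1 : (e - φ n) (y + v) = (y - φ n y) + (w' - φ n w') := by
              simp only [he, ContinuousLinearMap.sub_apply, ContinuousLinearMap.id_apply,
                ← hrw, map_add]
              rw [hrfix]
              abel
            have h2 : (e - ψ) ((y - φ n y) + (w' - φ n w')) =
                (y - φ n y) - ψ (y - φ n y) := by
              simp only [he, ContinuousLinearMap.sub_apply, ContinuousLinearMap.id_apply,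
                map_add, map_sub]
              rw [hcommpt, hw'fix]
              abel
            rw [ContinuousLinearMap.comp_apply, ContinuousLinearMap.comp_apply, h1, h2]
            exact hχY _ hyY2
          have hθx := hx _ hθC hθkill
          have hexp : (χ.comp ((e - ψ).comp (e - φ n))) x
              = χ (x - φ n x - ψ (x - φ n x)) := by
            simp only [he, ContinuousLinearMap.comp_apply, ContinuousLinearMap.sub_apply,
              ContinuousLinearMap.id_apply]
          rw [hexp] at hθx
          exact hθx
        · apply hWV n
          rw [hWn]
          exact hψidem _
      have hsub2 : MapClusterPt (StrongDual.toWeakDual (x - p)) Filter.atTop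
          (fun n => StrongDual.toWeakDual (x - φ n x)) := by
        have hcont : ContinuousAt (fun w : WeakDual ℂ E =>
            StrongDual.toWeakDual x - w) q :=
          (continuous_const.sub continuous_id).continuousAt
        have hfun : (fun n => StrongDual.toWeakDual (x - φ n x)) =
            (fun n => StrongDual.toWeakDual x - StrongDual.toWeakDual (φ n x)) :=
          funext fun n => map_sub _ _ _
        have hpt : StrongDual.toWeakDual (x - p) =
            StrongDual.toWeakDual x - q := by rw [map_sub, hqp]
        rw [hfun, hpt]
        exact hq.continuousAt_comp hcont
      have hxp : x - p ∈ WClosure (RefC C (Y : Set (X E)) + (pV : Set (X E))) := by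
        show StrongDual.toWeakDual (x - p) ∈ closure
          (StrongDual.toWeakDual '' (RefC C (Y : Set (X E)) + (pV : Set (X E))))
        rw [mem_closure_iff_clusterPt]
        apply hsub2.clusterPt.mono
        rw [Filter.le_principal_iff, Filter.mem_map]
        exact Filter.univ_mem' fun n => ⟨x - φ n x, hdec n, rfl⟩
      have hfin : x - p + p = x := by abel
      rw [← hfin]
      show StrongDual.toWeakDual (x - p + p) ∈ closure
        (StrongDual.toWeakDual '' (RefC C (Y : Set (X E)) + (pV : Set (X E))))
      have himg : StrongDual.toWeakDual (x - p + p)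
          ∈ (fun w : WeakDual ℂ E => w + StrongDual.toWeakDual p) ''
            closure (StrongDual.toWeakDual ''
              (RefC C (Y : Set (X E)) + (pV : Set (X E)))) :=
        ⟨StrongDual.toWeakDual (x - p), hxp,
          (map_add StrongDual.toWeakDual (x - p) p).symm⟩
      have hsub3 := image_closure_subset_closure_image
        (f := fun w : WeakDual ℂ E => w + StrongDual.toWeakDual p)
        (s := StrongDual.toWeakDual '' (RefC C (Y : Set (X E)) + (pV : Set (X E))))
        (continuous_id.add continuous_const)
      have hsub4 : (fun w : WeakDual ℂ E => w + StrongDual.toWeakDual p) ''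
          (StrongDual.toWeakDual '' (RefC C (Y : Set (X E)) + (pV : Set (X E)))) ⊆
          StrongDual.toWeakDual '' (RefC C (Y : Set (X E)) + (pV : Set (X E))) := by
        rintro _ ⟨_, ⟨b, hb, rfl⟩, rfl⟩
        refine ⟨b + p, ?_, map_add _ _ _⟩
        rw [Set.mem_add] at hb ⊢
        obtain ⟨c, hc, v, hv, rfl⟩ := hb
        exact ⟨c, hc, v + p, pV.add_mem hv hpV, by abel⟩
      exact closure_mono hsub4 (hsub3 himg)
    · exact wclosure_subset (wclosed_refC hwc _) hsub
  refine ⟨hmain, fun hY => ?_⟩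
  rw [refC_wclosure hwc, hmain, hY]

end RBP
end
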